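/- Let c₁ > 0 and c₃ = c₃₁ = −(2/3)·√(10c₁). Then A₁ = A₂ = A₄ = √(10c₁)/10 =: A*, the corresponding forcing values satisfy F₁ = F₂ = F₄ = 0 (i.e. A*·(10A*² + 3c₃A* + c₁)² = 0), and at the point (A, Ω) = (A*, 1) the following hold: ∂g/∂A = 0, ∂²g/∂A² = 0, ∂³g/∂A³ = 0, ∂g/∂Ω = 0, ∂²g/∂A∂Ω = 0, while ∂⁴g/∂A⁴ ≠ 0; i.e., g has a singularity of codimension at least four at this point. -/

import Mathlib

/-- The harmonic-balance frequency-response function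
`g(A, Ω, F, c₁, c₃)` of the oscillator `ẍ + x + c₁ẋ + c₃ẋ³ + ẋ⁵ = 2f cos(ωt)`. -/
noncomputable def g (A Ω F c1 c3 : ℝ) : ℝ :=
  100 * A ^ 5 * Ω ^ 5 + 60 * A ^ 4 * c3 * Ω ^ 4
    + A ^ 3 * Ω ^ 3 * (20 * c1 + 9 * c3 ^ 2) + 6 * A ^ 2 * c1 * c3 * Ω ^ 2
    + A * ((c1 ^ 2 - 2) * Ω + Ω ^ 2 + 1) - F

lemma deriv_quintic' (a b c d e f : ℝ) :
    deriv (fun x : ℝ => a*x^5 + b*x^4 + c*x^3 + d*x^2 + e*x + f)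
      = fun x => 5*a*x^4 + 4*b*x^3 + 3*c*x^2 + 2*d*x + e := by
  funext x
  have h : HasDerivAt (fun x : ℝ => a*x^5 + b*x^4 + c*x^3 + d*x^2 + e*x + f)
      (5*a*x^4 + 4*b*x^3 + 3*c*x^2 + 2*d*x + e) x := by
    have h5 := (hasDerivAt_pow 5 x).const_mul a
    have h4 := (hasDerivAt_pow 4 x).const_mul b
    have h3 := (hasDerivAt_pow 3 x).const_mul c
    have h2 := (hasDerivAt_pow 2 x).const_mul d
    have h1 := (hasDerivAt_id x).const_mul e
    have := ((((h5.add h4).add h3).add h2).add h1).add_const f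
    refine this.congr_deriv ?_
    push_cast
    ring
  exact h.deriv

lemma quintic_eq (a b c d e : ℝ) :
    (fun x : ℝ => 5*a*x^4 + 4*b*x^3 + 3*c*x^2 + 2*d*x + e)
      = fun x : ℝ => 0*x^5 + (5*a)*x^4 + (4*b)*x^3 + (3*c)*x^2 + (2*d)*x + e := by
  funext x; ring

/-- at `c₃ = c₃₁ = −(2/3)√(10c₁)` one has
`A₁ = A₂ = A₄ = √(10c₁)/10 = A*` with `F₁ = F₂ = F₄ = 0`, and at `(A*, 1)`
the conditions `g_A = g_AA = g_AAA = g_Ω = g_AΩ = 0` and `g_AAAA ≠ 0` hold,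
i.e. `g` has a singularity of codimension at least four there. -/
theorem codimension_ge_four (c1 c3 : ℝ) (hc1 : 0 < c1)
    (hc3 : c3 = -(2 / 3) * Real.sqrt (10 * c1))
    (Astar : ℝ) (hAstar : Astar = Real.sqrt (10 * c1) / 10) :
    (-3 * c3 - Real.sqrt (9 * c3 ^ 2 - 40 * c1)) / 20 = Astar ∧
    (-3 * c3 + Real.sqrt (9 * c3 ^ 2 - 40 * c1)) / 20 = Astar ∧
    (-9 * c3 + Real.sqrt (81 * c3 ^ 2 - 200 * c1)) / 100 = Astar ∧
    Astar * (10 * Astar ^ 2 + 3 * c3 * Astar + c1) ^ 2 = 0 ∧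
    ∀ F : ℝ,
      deriv (fun A => g A 1 F c1 c3) Astar = 0 ∧
      deriv (deriv (fun A => g A 1 F c1 c3)) Astar = 0 ∧
      deriv (deriv (deriv (fun A => g A 1 F c1 c3))) Astar = 0 ∧
      deriv (fun Ω => g Astar Ω F c1 c3) 1 = 0 ∧
      deriv (fun Ω => deriv (fun A => g A Ω F c1 c3) Astar) 1 = 0 ∧
      deriv (deriv (deriv (deriv (fun A => g A 1 F c1 c3)))) Astar ≠ 0 := by
  set s : ℝ := Real.sqrt (10 * c1) with hsdef
  have hs0 : 0 < s := Real.sqrt_pos.mpr (by linarith)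
  have hs : s ^ 2 = 10 * c1 := Real.sq_sqrt (by linarith)
  have hc1' : c1 = s ^ 2 / 10 := by linarith
  have hA : Astar = s / 10 := hAstar
  -- the two square roots
  have hsq1 : Real.sqrt (9 * c3 ^ 2 - 40 * c1) = 0 := by
    have : 9 * c3 ^ 2 - 40 * c1 = 0 := by rw [hc3, hc1']; ring
    rw [this, Real.sqrt_zero]
  have hsq2 : Real.sqrt (81 * c3 ^ 2 - 200 * c1) = 4 * s := by
    have h1 : 81 * c3 ^ 2 - 200 * c1 = (4 * s) ^ 2 := by
      rw [hc3, hc1']; ring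
    rw [h1, Real.sqrt_sq (by positivity)]
  refine ⟨?_, ?_, ?_, ?_, ?_⟩
  · rw [hsq1, hc3, hA]; ring
  · rw [hsq1, hc3, hA]; ring
  · rw [hsq2, hc3, hA]; ring
  · rw [hc3, hA, hc1']; ring
  intro F
  -- rewrite g as an explicit quintic in A (for fixed Ω)
  have hg1 : ∀ (F Ω : ℝ), (fun A => g A Ω F c1 c3)
      = fun A : ℝ => (100*Ω^5)*A^5 + (60*c3*Ω^4)*A^4 + (Ω^3*(20*c1+9*c3^2))*A^3
        + (6*c1*c3*Ω^2)*A^2 + ((c1^2-2)*Ω+Ω^2+1)*A + (-F) := by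
    intro F Ω; funext A; simp only [g]; ring
  -- first A-derivative for general Ω
  have hd1 : ∀ (F Ω : ℝ), deriv (fun A => g A Ω F c1 c3)
      = fun A : ℝ => 5*(100*Ω^5)*A^4 + 4*(60*c3*Ω^4)*A^3 + 3*(Ω^3*(20*c1+9*c3^2))*A^2
        + 2*(6*c1*c3*Ω^2)*A + ((c1^2-2)*Ω+Ω^2+1) := by
    intro F Ω; rw [hg1 F Ω, deriv_quintic']
  -- iterated A-derivatives at Ω = 1
  have hd2 : deriv (deriv (fun A => g A 1 F c1 c3))
      = fun A : ℝ => 5*0*A^4 + 4*(5*(100*1^5))*A^3 + 3*(4*(60*c3*1^4))*A^2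
        + 2*(3*(1^3*(20*c1+9*c3^2)))*A + (2*(6*c1*c3*1^2)) := by
    rw [hd1 F 1, quintic_eq, deriv_quintic']
  have hd3 : deriv (deriv (deriv (fun A => g A 1 F c1 c3)))
      = fun A : ℝ => 5*0*A^4 + 4*0*A^3 + 3*(4*(5*(100*1^5)))*A^2
        + 2*(3*(4*(60*c3*1^4)))*A + (2*(3*(1^3*(20*c1+9*c3^2)))) := by
    rw [hd2, quintic_eq, deriv_quintic']; funext A; ring
  have hd4 : deriv (deriv (deriv (deriv (fun A => g A 1 F c1 c3))))
      = fun A : ℝ => 5*0*A^4 + 4*0*A^3 + 3*0*A^2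
        + 2*(3*(4*(5*(100*1^5))))*A + (2*(3*(4*(60*c3*1^4)))) := by
    rw [hd3, quintic_eq, deriv_quintic']; funext A; ring
  -- g as a quintic in Ω at A = Astar
  have hg2 : (fun Ω => g Astar Ω F c1 c3)
      = fun Ω : ℝ => (100*Astar^5)*Ω^5 + (60*Astar^4*c3)*Ω^4 + (Astar^3*(20*c1+9*c3^2))*Ω^3
        + (6*Astar^2*c1*c3 + Astar)*Ω^2 + (Astar*(c1^2-2))*Ω + (Astar - F) := by
    funext Ω; simp only [g]; ring
  -- mixed: the A-derivative at Astar as a quintic in Ω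
  have hgmix : (fun Ω => deriv (fun A => g A Ω F c1 c3) Astar)
      = fun Ω : ℝ => (500*Astar^4)*Ω^5 + (240*c3*Astar^3)*Ω^4 + (3*(20*c1+9*c3^2)*Astar^2)*Ω^3
        + (12*c1*c3*Astar + 1)*Ω^2 + (c1^2-2)*Ω + 1 := by
    funext Ω; rw [hd1 F Ω]; ring
  refine ⟨?_, ?_, ?_, ?_, ?_, ?_⟩
  · rw [hd1 F 1]
    simp only
    rw [hA, hc3, hc1']; ring
  · rw [hd2]
    simp only
    rw [hA, hc3, hc1']; ring
  · rw [hd3]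
    simp only
    rw [hA, hc3, hc1']; ring
  · rw [hg2, deriv_quintic']
    simp only
    rw [hA, hc3, hc1']; ring
  · rw [hgmix, deriv_quintic']
    simp only
    rw [hA, hc3, hc1']; ring
  · rw [hd4]
    simp only
    rw [hA, hc3]
    have : 5*0*(s/10)^4 + 4*0*(s/10)^3 + 3*0*(s/10)^2
        + 2*(3*(4*(5*(100*(1:ℝ)^5))))*(s/10) + (2*(3*(4*(60*(-(2/3)*s)*1^4)))) = 240 * s := by
      ring
    rw [this]
    positivity
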